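/- arXiv:1302.3695 — 2 statements merged into one kernel-verified Lean document; each statement's English description precedes it below -/
import Mathlib

section
/- Let a, b > 0, φ as in the Section 2 assumptions, and F(z) = ∫_{-a}^{b} φ(t) e^{zt} dt. Then as n → ∞, F(nz) = f₂(0) Γ(ν+1) (nz)^{-ν-1} e^{bnz}(1 + O(1/n)) uniformly for z in a compact subset of {Re z > 0}. -/
/-!
Substituting `t = b - s` gives `F(w) = e^{bw} ∫_{(0, ∞)} g(s) e^{-ws} ds` with
`g = φ(b - ·)` on `(0, a + b]` and `0` beyond, and near `s = 0` we have `g(s) = s^ν f₂(s)` with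
`f₂(s) = f₂(0) + O(s)`. The Laplace transform of `f₂(0) s^ν` is `f₂(0) Γ(ν+1) w^{-ν-1}` (the Gamma
integral for real `w`, then analytic continuation to `Re w > 0`). In the Laplace transform of the
difference, the part over `(0, δ]` is `O(∫ s^{ν.re+1} e^{-s Re w} ds) = O((Re w)^{-ν.re-2})` and
the rest is `O(e^{-δ Re w})`. For `w = nz` with `z` in the compact set `K`, `Re w ≥ n min_K Re`
and `|z^{-ν-1}|` is bounded below, so this error is `O(1/n)` relative to the main term.
-/

open MeasureTheory Complex Set Filter Topology

section LaplaceCpow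

lemma norm_cexp_neg_mul_ofReal (w : ℂ) (s : ℝ) : ‖cexp (-(w * s))‖ = Real.exp (-(w.re * s)) := by
  simp [Complex.norm_exp]

lemma integrableOn_rpow_mul_exp_neg_mul {σ c : ℝ} (hσ : -1 < σ) (hc : 0 < c) :
    IntegrableOn (fun t : ℝ => t ^ σ * Real.exp (-(c * t))) (Ioi 0) := by
  simpa [Real.rpow_one] using integrableOn_rpow_mul_exp_neg_mul_rpow hσ zero_lt_one hc

lemma norm_cpow_mul_cexp_neg_mul (ν w : ℂ) {t : ℝ} (ht : 0 < t) :
    ‖(t : ℂ) ^ ν * cexp (-(w * t))‖ = t ^ ν.re * Real.exp (-(w.re * t)) := by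
  rw [norm_mul, norm_cpow_eq_rpow_re_of_pos ht, norm_cexp_neg_mul_ofReal]

lemma aestronglyMeasurable_cpow_mul_cexp_neg_mul (ν w : ℂ) :
    AEStronglyMeasurable (fun t : ℝ => (t : ℂ) ^ ν * cexp (-(w * t))) (volume.restrict (Ioi 0)) :=
  ContinuousOn.aestronglyMeasurable (fun t ht => ((continuousAt_ofReal_cpow_const t ν
    (Or.inr (ne_of_gt ht))).mul (by fun_prop)).continuousWithinAt) measurableSet_Ioi

variable {ν w : ℂ}

lemma integrableOn_cpow_mul_cexp_neg_mul (hν : -1 < ν.re) (hw : 0 < w.re) :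
    IntegrableOn (fun t : ℝ => (t : ℂ) ^ ν * cexp (-(w * t))) (Ioi 0) := by
  refine (integrableOn_rpow_mul_exp_neg_mul hν hw).mono'
    (aestronglyMeasurable_cpow_mul_cexp_neg_mul ν w) ?_
  filter_upwards [self_mem_ae_restrict measurableSet_Ioi] with t ht
  exact (norm_cpow_mul_cexp_neg_mul ν w ht).le

lemma differentiableAt_integral_cpow_mul_cexp_neg_mul (hν : -1 < ν.re) (hw : 0 < w.re) :
    DifferentiableAt ℂ (fun w : ℂ => ∫ t in Ioi (0 : ℝ), (t : ℂ) ^ ν * cexp (-(w * t))) w := by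
  have hball : ∀ x ∈ Metric.ball w (w.re / 2), w.re / 2 ≤ x.re := fun x hx => by
    have := (abs_re_le_norm (x - w)).trans (mem_ball_iff_norm.mp hx).le
    rw [sub_re] at this
    linarith [neg_abs_le (x.re - w.re)]
  refine (hasDerivAt_integral_of_dominated_loc_of_deriv_le
    (F' := fun x (t : ℝ) => (t : ℂ) ^ ν * (cexp (-(x * t)) * -t))
    (bound := fun t => t ^ (ν.re + 1) * Real.exp (-(w.re / 2 * t)))
    (Metric.ball_mem_nhds w (half_pos hw))
    (.of_forall fun x => aestronglyMeasurable_cpow_mul_cexp_neg_mul ν x)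
    (integrableOn_cpow_mul_cexp_neg_mul hν hw) ?_ ?_
    (integrableOn_rpow_mul_exp_neg_mul (by linarith) (half_pos hw)) ?_).2.differentiableAt
  · exact ((aestronglyMeasurable_cpow_mul_cexp_neg_mul ν w).mul
      (by fun_prop : Continuous fun t : ℝ => -(t : ℂ)).aestronglyMeasurable).congr
      (.of_forall fun t => mul_assoc _ _ _)
  · filter_upwards [self_mem_ae_restrict measurableSet_Ioi] with t (ht : 0 < t) x hx
    rw [← mul_assoc, norm_mul, norm_cpow_mul_cexp_neg_mul ν x ht, norm_neg, norm_real,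
      Real.norm_of_nonneg ht.le, Real.rpow_add_one ht.ne']
    have : Real.exp (-(x.re * t)) ≤ Real.exp (-(w.re / 2 * t)) :=
      Real.exp_le_exp.mpr (by nlinarith [hball x hx])
    calc t ^ ν.re * Real.exp (-(x.re * t)) * t = t ^ ν.re * t * Real.exp (-(x.re * t)) := by ring
      _ ≤ t ^ ν.re * t * Real.exp (-(w.re / 2 * t)) := by gcongr
  · exact .of_forall fun t x _ => ((hasDerivAt_mul_const (t : ℂ)).neg.cexp).const_mul _

theorem integral_cpow_mul_cexp_neg_mul_Ioi (hν : -1 < ν.re) (hw : 0 < w.re) :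
    ∫ t in Ioi (0 : ℝ), (t : ℂ) ^ ν * cexp (-(w * t)) = Gamma (ν + 1) * w ^ (-(ν + 1)) := by
  set U := {z : ℂ | 0 < z.re}
  have hU : IsOpen U := isOpen_lt continuous_const continuous_re
  have hν1 : 0 < (ν + 1).re := by simp only [add_re, one_re]; linarith
  have hlhs : AnalyticOnNhd ℂ (fun w : ℂ => ∫ t in Ioi (0 : ℝ), (t : ℂ) ^ ν * cexp (-(w * t))) U :=
    DifferentiableOn.analyticOnNhd (fun x hx =>
      (differentiableAt_integral_cpow_mul_cexp_neg_mul hν hx).differentiableWithinAt) hU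
  have hrhs : AnalyticOnNhd ℂ (fun w : ℂ => Gamma (ν + 1) * w ^ (-(ν + 1))) U :=
    DifferentiableOn.analyticOnNhd (fun x hx =>
      ((differentiableAt_id.cpow_const (Or.inl hx)).const_mul _).differentiableWithinAt) hU
  -- the two sides agree on the positive reals, which accumulate at `1`
  have hreal : ∀ r : ℝ, 0 < r → ∫ t in Ioi (0 : ℝ), (t : ℂ) ^ ν * cexp (-(r * t))
      = Gamma (ν + 1) * (r : ℂ) ^ (-(ν + 1)) := fun r hr => by
    rw [show ν = ν + 1 - 1 by ring, integral_cpow_mul_exp_neg_mul_Ioi hν1 hr, add_sub_cancel_right,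
      cpow_neg, one_div, inv_cpow _ _ (by simp [arg_ofReal_of_nonneg hr.le, Real.pi_ne_zero.symm]),
      mul_comm]
  have hfreq : ∃ᶠ z in 𝓝[≠] (1 : ℂ), (∫ t in Ioi (0 : ℝ), (t : ℂ) ^ ν * cexp (-(z * t)))
      = Gamma (ν + 1) * z ^ (-(ν + 1)) := by
    have hmap : Tendsto ((↑) : ℝ → ℂ) (𝓝[≠] 1) (𝓝[≠] 1) :=
      continuous_ofReal.continuousWithinAt.tendsto_nhdsWithin
        (fun x hx => by simpa [← ofReal_one, ofReal_inj] using hx)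
    refine hmap.frequently (Eventually.frequently ?_)
    filter_upwards [nhdsWithin_le_nhds (lt_mem_nhds one_pos)] with r hr using hreal r hr
  exact hlhs.eqOn_of_preconnected_of_frequently_eq hrhs (convex_halfSpace_re_gt 0).isPreconnected
    (by simp [U]) hfreq hw

end LaplaceCpow

lemma Real.exp_neg_mul_le_rpow_neg {p δ r : ℝ} (hp : 0 < p) (hδ : 0 < δ) (hr : 0 < r) :
    Real.exp (-(δ * r)) ≤ (p / δ) ^ p * r ^ (-p) := by
  have hy : 0 < δ * r / p := by positivity
  have hle : (δ * r / p) ^ p ≤ Real.exp (δ * r) := by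
    calc (δ * r / p) ^ p ≤ Real.exp (δ * r / p) ^ p := by
          gcongr; linarith [Real.add_one_le_exp (δ * r / p)]
      _ = Real.exp (δ * r) := by rw [← Real.exp_mul, div_mul_cancel₀ _ hp.ne']
  calc Real.exp (-(δ * r)) = (Real.exp (δ * r))⁻¹ := Real.exp_neg _
    _ ≤ ((δ * r / p) ^ p)⁻¹ := inv_anti₀ (by positivity) hle
    _ = (p / δ) ^ p * r ^ (-p) := by
      rw [← Real.inv_rpow hy.le, inv_div, ← div_div, Real.div_rpow (by positivity) hr.le,
        Real.rpow_neg hr.le, div_eq_mul_inv]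

section LaplaceRemainder

variable {h : ℝ → ℂ} {x₀ δ M p : ℝ} {w : ℂ}

lemma integrableOn_mul_cexp_neg_mul_of_le_re
    (hh : IntegrableOn (fun s => h s * cexp (-(x₀ * s))) (Ioi 0)) (hw : x₀ ≤ w.re) :
    IntegrableOn (fun s => h s * cexp (-(w * s))) (Ioi 0) := by
  refine (hh.mul_bdd (c := 1) (g := fun s : ℝ => cexp (-((w - x₀) * s)))
    (by fun_prop) ?_).congr (.of_forall fun s => ?_)
  · filter_upwards [self_mem_ae_restrict measurableSet_Ioi] with s (hs : 0 < s)
    rw [norm_cexp_neg_mul_ofReal, Real.exp_le_one_iff, sub_re, ofReal_re, neg_nonpos]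
    exact mul_nonneg (sub_nonneg.mpr hw) hs.le
  · simp only [mul_assoc, ← Complex.exp_add]
    ring_nf

lemma norm_setIntegral_Ioi_mul_cexp_neg_mul_le
    (hh : IntegrableOn (fun s => h s * cexp (-(x₀ * s))) (Ioi δ)) (hw : x₀ ≤ w.re) :
    ‖∫ s in Ioi δ, h s * cexp (-(w * s))‖
      ≤ (∫ s in Ioi δ, ‖h s * cexp (-(x₀ * s))‖) * Real.exp (-(δ * (w.re - x₀))) := by
  rw [← integral_mul_const]
  refine norm_integral_le_of_norm_le (hh.norm.mul_const _) ?_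
  filter_upwards [self_mem_ae_restrict measurableSet_Ioi] with s (hs : δ < s)
  have hsplit : ‖h s * cexp (-(w * s))‖
      = ‖h s * cexp (-(x₀ * s))‖ * Real.exp (-((w.re - x₀) * s)) := by
    simp only [norm_mul, norm_cexp_neg_mul_ofReal, ofReal_re, mul_assoc, ← Real.exp_add]
    ring_nf
  rw [hsplit]
  exact mul_le_mul_of_nonneg_left (Real.exp_le_exp.mpr (by nlinarith [sub_nonneg.mpr hw]))
    (norm_nonneg _)

lemma norm_setIntegral_Ioc_mul_cexp_neg_mul_le (hp : 0 < p) (hM : 0 ≤ M)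
    (hbound : ∀ s ∈ Ioc 0 δ, ‖h s‖ ≤ M * s ^ (p - 1))
    (hw : 0 < w.re) :
    ‖∫ s in Ioc 0 δ, h s * cexp (-(w * s))‖ ≤ M * Real.Gamma p * w.re ^ (-p) := by
  have hmajorant : IntegrableOn (fun s => M * (s ^ (p - 1) * Real.exp (-(w.re * s)))) (Ioi 0) :=
    (integrableOn_rpow_mul_exp_neg_mul (by linarith) hw).const_mul M
  calc ‖∫ s in Ioc 0 δ, h s * cexp (-(w * s))‖
      ≤ ∫ s in Ioc 0 δ, M * (s ^ (p - 1) * Real.exp (-(w.re * s))) := by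
        refine norm_integral_le_of_norm_le (hmajorant.mono_set Ioc_subset_Ioi_self) ?_
        filter_upwards [self_mem_ae_restrict measurableSet_Ioc] with s hs
        rw [norm_mul, norm_cexp_neg_mul_ofReal, ← mul_assoc]
        gcongr
        exact hbound s hs
    _ ≤ ∫ s in Ioi 0, M * (s ^ (p - 1) * Real.exp (-(w.re * s))) := by
        refine setIntegral_mono_set hmajorant ?_ Ioc_subset_Ioi_self.eventuallyLE
        filter_upwards [self_mem_ae_restrict measurableSet_Ioi] with s (hs : 0 < s)
        positivity
    _ = M * Real.Gamma p * w.re ^ (-p) := by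
        rw [integral_const_mul, Real.integral_rpow_mul_exp_neg_mul_Ioi hp hw, one_div,
          Real.inv_rpow hw.le, Real.rpow_neg hw.le]
        ring

theorem exists_norm_integral_mul_cexp_neg_mul_le (hp : 0 < p) (hδ : 0 < δ) (hM : 0 ≤ M)
    (hbound : ∀ s ∈ Ioc 0 δ, ‖h s‖ ≤ M * s ^ (p - 1))
    (hh : IntegrableOn (fun s => h s * cexp (-(x₀ * s))) (Ioi 0)) :
    ∃ C, 0 ≤ C ∧ ∀ w : ℂ, x₀ ≤ w.re → 0 < w.re →
      ‖∫ s in Ioi 0, h s * cexp (-(w * s))‖ ≤ C * w.re ^ (-p) := by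
  set A := ∫ s in Ioi δ, ‖h s * cexp (-(x₀ * s))‖
  have hA : 0 ≤ A := integral_nonneg fun _ => norm_nonneg _
  have hΓ : 0 < Real.Gamma p := Real.Gamma_pos_of_pos hp
  refine ⟨M * Real.Gamma p + A * Real.exp (δ * x₀) * (p / δ) ^ p, by positivity,
    fun w hw hw₀ => ?_⟩
  have hint := integrableOn_mul_cexp_neg_mul_of_le_re hh hw
  have htail : A * Real.exp (-(δ * (w.re - x₀)))
      ≤ A * Real.exp (δ * x₀) * (p / δ) ^ p * w.re ^ (-p) := by
    rw [show -(δ * (w.re - x₀)) = δ * x₀ + -(δ * w.re) by ring, Real.exp_add, mul_assoc A,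
      mul_assoc A, mul_assoc]
    gcongr
    exact Real.exp_neg_mul_le_rpow_neg hp hδ hw₀
  rw [← Ioc_union_Ioi_eq_Ioi hδ.le, setIntegral_union (Ioc_disjoint_Ioi le_rfl) measurableSet_Ioi
    (hint.mono_set Ioc_subset_Ioi_self) (hint.mono_set (Ioi_subset_Ioi hδ.le))]
  calc _ ≤ _ := norm_add_le _ _
    _ ≤ M * Real.Gamma p * w.re ^ (-p) + A * Real.exp (-(δ * (w.re - x₀))) :=
        add_le_add (norm_setIntegral_Ioc_mul_cexp_neg_mul_le hp hM hbound hw₀)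
          (norm_setIntegral_Ioi_mul_cexp_neg_mul_le
            (hh.mono_set (Ioi_subset_Ioi hδ.le)) hw)
    _ ≤ _ := by rw [add_mul]; gcongr

end LaplaceRemainder

lemma norm_cpow_mul_sub_le_of_norm_deriv_le {f : ℝ → ℂ} {ν : ℂ} {δ M s : ℝ}
    (hd : ∀ t ∈ Icc 0 δ, DifferentiableAt ℝ f t) (hM : ∀ t ∈ Icc 0 δ, ‖deriv f t‖ ≤ M)
    (hs : s ∈ Ioc 0 δ) :
    ‖(s : ℂ) ^ ν * (f s - f 0)‖ ≤ M * s ^ (ν.re + 1) := by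
  have hmvt : ‖f s - f 0‖ ≤ M * s := by
    simpa using norm_image_sub_le_of_norm_deriv_le_segment'
      (fun t ht => (hd t ht).hasDerivAt.hasDerivWithinAt)
      (fun t ht => hM t (Ico_subset_Icc_self ht))
      s (Ioc_subset_Icc_self hs)
  rw [norm_mul, norm_cpow_eq_rpow_re_of_pos hs.1, Real.rpow_add_one hs.1.ne']
  calc s ^ ν.re * ‖f s - f 0‖ ≤ s ^ ν.re * (M * s) :=
        mul_le_mul_of_nonneg_left hmvt (Real.rpow_nonneg hs.1.le _)
    _ = M * (s ^ ν.re * s) := by ring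

theorem exists_norm_integral_mul_cexp_neg_mul_sub_le {g f : ℝ → ℂ} {ν : ℂ} {δ M x₀ : ℝ}
    (hν : -1 < ν.re) (hδ : 0 < δ) (hx₀ : 0 < x₀)
    (hg : IntegrableOn g (Ioi 0)) (hgf : ∀ s ∈ Ioc 0 δ, g s = (s : ℂ) ^ ν * f s)
    (hd : ∀ t ∈ Icc 0 δ, DifferentiableAt ℝ f t) (hM : ∀ t ∈ Icc 0 δ, ‖deriv f t‖ ≤ M) :
    ∃ C, 0 ≤ C ∧ ∀ w : ℂ, x₀ ≤ w.re →
      ‖(∫ s in Ioi 0, g s * cexp (-(w * s))) - f 0 * Gamma (ν + 1) * w ^ (-(ν + 1))‖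
        ≤ C * w.re ^ (-(ν.re + 2)) := by
  have hgexp : ∀ w : ℂ, 0 ≤ w.re → IntegrableOn (fun s => g s * cexp (-(w * s))) (Ioi 0) :=
    fun w hw => integrableOn_mul_cexp_neg_mul_of_le_re (x₀ := 0) (by simpa using hg) hw
  have hcpow : ∀ w : ℂ, 0 < w.re →
      IntegrableOn (fun s : ℝ => f 0 * ((s : ℂ) ^ ν * cexp (-(w * s)))) (Ioi 0) :=
    fun w hw => (integrableOn_cpow_mul_cexp_neg_mul hν hw).const_mul _
  have hsub : ∀ w : ℂ, 0 < w.re → (∫ s in Ioi 0, g s * cexp (-(w * s)))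
      - f 0 * Gamma (ν + 1) * w ^ (-(ν + 1))
      = ∫ s in Ioi 0, (g s - f 0 * (s : ℂ) ^ ν) * cexp (-(w * s)) := fun w hw => by
    rw [mul_assoc, ← integral_cpow_mul_cexp_neg_mul_Ioi hν hw, ← integral_const_mul,
      ← integral_sub (hgexp w hw.le) (hcpow w hw)]
    simp only [sub_mul, mul_assoc]
  have hM0 : 0 ≤ M := (norm_nonneg _).trans (hM 0 ⟨le_rfl, hδ.le⟩)
  have hbound : ∀ s ∈ Ioc 0 δ, ‖g s - f 0 * (s : ℂ) ^ ν‖ ≤ M * s ^ (ν.re + 2 - 1) := fun s hs => by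
    rw [hgf s hs, ← mul_comm _ (f 0), ← mul_sub, show ν.re + 2 - 1 = ν.re + 1 by ring]
    exact norm_cpow_mul_sub_le_of_norm_deriv_le hd hM hs
  have hh : IntegrableOn (fun s => (g s - f 0 * (s : ℂ) ^ ν) * cexp (-(x₀ * s))) (Ioi 0) :=
    ((hgexp x₀ (by rw [ofReal_re]; exact hx₀.le)).sub
      (hcpow x₀ (by rwa [ofReal_re]))).congr_fun
      (fun s _ => by simp only [Pi.sub_apply]; ring) measurableSet_Ioi
  obtain ⟨C, hC0, hC⟩ := exists_norm_integral_mul_cexp_neg_mul_le (by linarith) hδ hM0 hbound hh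
  exact ⟨C, hC0, fun w hw => by
    rw [hsub w (hx₀.trans_le hw)]; exact hC w hw (hx₀.trans_le hw)⟩

lemma norm_ofReal_mul_cpow {r : ℝ} (hr : 0 < r) {z : ℂ} (hz : z ≠ 0) (s : ℂ) :
    ‖((r : ℂ) * z) ^ s‖ = r ^ s.re * ‖z ^ s‖ := by
  rw [norm_cpow_of_ne_zero (mul_ne_zero (ofReal_ne_zero.mpr hr.ne') hz), norm_cpow_of_ne_zero hz,
    arg_real_mul _ hr, norm_mul, norm_real, Real.norm_of_nonneg hr.le,
    Real.mul_rpow hr.le (norm_nonneg z)]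
  ring

lemma intervalIntegral_mul_cexp_eq_cexp_mul_setIntegral (φ : ℝ → ℂ) {a b : ℝ} (hab : 0 ≤ a + b)
    (w : ℂ) :
    ∫ t in (-a)..b, φ t * cexp (w * t)
      = cexp (w * b) * ∫ s in Ioi 0,
          (Ioc 0 (a + b)).indicator (fun s => φ (b - s)) s * cexp (-(w * s)) := by
  have hsub := intervalIntegral.integral_comp_sub_left (fun t => φ t * cexp (w * t)) b
    (a := 0) (b := a + b)
  rw [show b - (a + b) = -a by ring, sub_zero] at hsub
  have hind : (fun s : ℝ => (Ioc 0 (a + b)).indicator (fun s => φ (b - s)) s * cexp (-(w * s)))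
      = (Ioc 0 (a + b)).indicator fun s => φ (b - s) * cexp (-(w * s)) :=
    funext fun s => (indicator_mul_left _ _ fun s : ℝ => cexp (-(w * s))).symm
  rw [hind, ← hsub, intervalIntegral.integral_of_le hab, setIntegral_indicator measurableSet_Ioc,
    inter_eq_right.mpr Ioc_subset_Ioi_self, ← integral_const_mul]
  refine setIntegral_congr_fun measurableSet_Ioc fun s _ => ?_
  rw [ofReal_sub, mul_sub, sub_eq_add_neg (w * b), Complex.exp_add]
  ring

lemma norm_sub_le_div_natCast_mul_norm {I c z ν : ℂ} {C x₀ m : ℝ} {n : ℕ} (hn : 1 ≤ n)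
    (hν : -1 < ν.re) (hx₀ : 0 < x₀) (hz : x₀ ≤ z.re) (hmz : m ≤ ‖z ^ (-(ν + 1))‖) (hm : 0 < m)
    (hc : c ≠ 0) (hC : 0 ≤ C)
    (hI : ‖I - c * (n * z) ^ (-(ν + 1))‖ ≤ C * (n * z).re ^ (-(ν.re + 2))) :
    ‖I - c * (n * z) ^ (-(ν + 1))‖
      ≤ C * x₀ ^ (-(ν.re + 2)) / (‖c‖ * m) / n * ‖c * (n * z) ^ (-(ν + 1))‖ := by
  have hn0 : (0 : ℝ) < n := by exact_mod_cast hn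
  have hz0 : z ≠ 0 := fun h => by simp [h] at hz; linarith
  have hc0 : 0 < ‖c‖ := norm_pos_iff.mpr hc
  have hre : (n * z).re = n * z.re := by simp
  have hnorm : ‖c * (n * z) ^ (-(ν + 1))‖ = ‖c‖ * (n : ℝ) ^ (-(ν.re + 1)) * ‖z ^ (-(ν + 1))‖ := by
    rw [norm_mul, show (n : ℂ) = ((n : ℝ) : ℂ) by norm_cast, norm_ofReal_mul_cpow hn0 hz0]
    simp [mul_assoc]
  have hpow : (n : ℝ) ^ (-(ν.re + 2)) = (n : ℝ) ^ (-(ν.re + 1)) / n := by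
    rw [show -(ν.re + 2) = -(ν.re + 1) - 1 by ring, Real.rpow_sub_one hn0.ne']
  calc ‖I - c * (n * z) ^ (-(ν + 1))‖ ≤ C * (n * x₀) ^ (-(ν.re + 2)) := by
        refine hI.trans (mul_le_mul_of_nonneg_left ?_ hC)
        rw [hre]
        exact Real.rpow_le_rpow_of_nonpos (by positivity) (by gcongr) (by linarith)
    _ = C * x₀ ^ (-(ν.re + 2)) / (‖c‖ * m) / n * (‖c‖ * (n : ℝ) ^ (-(ν.re + 1)) * m) := by
        rw [Real.mul_rpow hn0.le hx₀.le, hpow]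
        field_simp
    _ ≤ _ := by
        rw [hnorm]
        gcongr

theorem exists_norm_integral_mul_cexp_neg_mul_sub_le_div {g f : ℝ → ℂ} {ν : ℂ} {δ M : ℝ}
    {K : Set ℂ} (hν : -1 < ν.re) (hδ : 0 < δ)
    (hg : IntegrableOn g (Ioi 0)) (hgf : ∀ s ∈ Ioc 0 δ, g s = (s : ℂ) ^ ν * f s)
    (hd : ∀ t ∈ Icc 0 δ, DifferentiableAt ℝ f t) (hM : ∀ t ∈ Icc 0 δ, ‖deriv f t‖ ≤ M)
    (hf0 : f 0 ≠ 0) (hK : IsCompact K) (hKright : K ⊆ {z : ℂ | 0 < z.re}) :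
    ∃ C, ∀ n : ℕ, 1 ≤ n → ∀ z ∈ K,
      ‖(∫ s in Ioi 0, g s * cexp (-(n * z * s))) - f 0 * Gamma (ν + 1) * (n * z) ^ (-(ν + 1))‖
        ≤ C / n * ‖f 0 * Gamma (ν + 1) * (n * z) ^ (-(ν + 1))‖ := by
  obtain ⟨x₀, hx₀, hx₀K⟩ := hK.exists_forall_le' continuous_re.continuousOn hKright
  obtain ⟨m, hm, hmK⟩ := hK.exists_forall_le' (f := fun z => ‖z ^ (-(ν + 1))‖)
    (fun z hz => (continuousAt_cpow_const (Or.inl (hKright hz))).norm.continuousWithinAt)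
    (fun z hz => norm_pos_iff.mpr fun h0 => by
      have := hKright hz
      simp_all [cpow_eq_zero_iff])
  obtain ⟨C, hC0, hC⟩ := exists_norm_integral_mul_cexp_neg_mul_sub_le hν hδ hx₀ hg hgf hd hM
  refine ⟨C * x₀ ^ (-(ν.re + 2)) / (‖f 0 * Gamma (ν + 1)‖ * m), fun n hn z hz => ?_⟩
  have hnz : x₀ ≤ ((n : ℂ) * z).re := by
    have h1 : (1 : ℝ) ≤ n := by exact_mod_cast hn
    simp only [mul_re, natCast_re, natCast_im, zero_mul, sub_zero]
    nlinarith [hx₀K z hz]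
  exact norm_sub_le_div_natCast_mul_norm hn hν hx₀ (hx₀K z hz) (hmK z hz) hm
    (mul_ne_zero hf0 (Gamma_ne_zero_of_re_pos (by simp; linarith))) hC0 (hC _ hnz)

lemma integrableOn_indicator_comp_sub_left {φ : ℝ → ℂ} {a b : ℝ}
    (hφ : IntervalIntegrable φ volume (-a) b) :
    IntegrableOn ((Ioc 0 (a + b)).indicator fun s => φ (b - s)) (Ioi 0) := by
  have hφ' := (hφ.comp_sub_left b).symm
  rw [sub_self, sub_neg_eq_add, add_comm] at hφ'
  exact ((integrable_indicator_iff measurableSet_Ioc).mpr hφ'.1).integrableOn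

theorem F_asymptotics_right_halfplane_general
    (a b : ℝ) (ha : 0 < a) (hb : 0 < b)
    (ν : ℂ) (hν : -1 < ν.re)
    (φ f₂ : ℝ → ℂ)
    (hint : IntervalIntegrable φ volume (-a) b)
    (hφ₂ : ∀ t ∈ Set.Icc (-a) b, φ t = ((b - t : ℝ) : ℂ) ^ ν * f₂ (b - t))
    (hf₂0 : f₂ 0 ≠ 0)
    (hf₂ : ∃ δ > (0 : ℝ), (∀ t ∈ Set.Icc (0 : ℝ) δ, DifferentiableAt ℝ f₂ t) ∧
          ∃ M : ℝ, ∀ t ∈ Set.Icc (0 : ℝ) δ, ‖deriv f₂ t‖ ≤ M)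
    (F : ℂ → ℂ) (hF : ∀ z : ℂ, F z = ∫ t in (-a)..b, φ t * Complex.exp (z * t))
    (K : Set ℂ) (hK : IsCompact K) (hKright : K ⊆ {z : ℂ | 0 < z.re}) :
    ∃ C : ℝ, ∃ N : ℕ, ∀ n ≥ N, ∀ z ∈ K,
      ‖F ((n : ℂ) * z) -
          f₂ 0 * Complex.Gamma (ν + 1) * ((n : ℂ) * z) ^ (-ν - 1) *
            Complex.exp ((b : ℂ) * n * z)‖
        ≤ (C / n) *
          ‖f₂ 0 * Complex.Gamma (ν + 1) * ((n : ℂ) * z) ^ (-ν - 1) *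
            Complex.exp ((b : ℂ) * n * z)‖ := by
  obtain ⟨δ, hδ, hd, M, hM⟩ := hf₂
  have hL : 0 < a + b := by linarith
  have hgf : ∀ s ∈ Ioc 0 (min δ (a + b)),
      (Ioc 0 (a + b)).indicator (fun s => φ (b - s)) s = (s : ℂ) ^ ν * f₂ s := fun s hs => by
    have hs' : s ∈ Ioc 0 (a + b) := ⟨hs.1, hs.2.trans (min_le_right _ _)⟩
    rw [indicator_of_mem hs', hφ₂ (b - s) ⟨by linarith [hs'.2], by linarith [hs'.1]⟩,
      sub_sub_cancel]
  have hδ' : Icc 0 (min δ (a + b)) ⊆ Icc 0 δ := Icc_subset_Icc_right (min_le_left _ _)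
  obtain ⟨C, hC⟩ := exists_norm_integral_mul_cexp_neg_mul_sub_le_div hν (lt_min hδ hL)
    (integrableOn_indicator_comp_sub_left hint) hgf (fun t ht => hd t (hδ' ht))
    (fun t ht => hM t (hδ' ht)) hf₂0 hK hKright
  refine ⟨C, 1, fun n hn z hz => ?_⟩
  rw [hF, intervalIntegral_mul_cexp_eq_cexp_mul_setIntegral φ hL.le, ← neg_add',
    show (b : ℂ) * n * z = n * z * b by ring, mul_comm (cexp _), ← sub_mul, norm_mul, norm_mul,
    ← mul_assoc]
  exact mul_le_mul_of_nonneg_right (hC n hn z hz) (norm_nonneg _)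

/-- Asymptotics of `F(nz)` for `Re z > 0`:
`F(nz) = f₂(0) Γ(ν+1) (nz)^{-ν-1} e^{bnz} (1 + O(1/n))`
uniformly on compact subsets of the right half-plane. -/
theorem F_asymptotics_right_halfplane
    (a b : ℝ) (ha : 0 < a) (hb : 0 < b)
    (μ ν : ℂ) (hμ : -1 < μ.re) (hν : -1 < ν.re)
    (φ f₁ f₂ : ℝ → ℂ)
    (hint : IntervalIntegrable φ volume (-a) b)
    (hφ₁ : ∀ t ∈ Set.Icc (-a) b, φ t = ((t + a : ℝ) : ℂ) ^ μ * f₁ (t + a))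
    (hφ₂ : ∀ t ∈ Set.Icc (-a) b, φ t = ((b - t : ℝ) : ℂ) ^ ν * f₂ (b - t))
    (hf₁0 : f₁ 0 ≠ 0) (hf₂0 : f₂ 0 ≠ 0)
    (hf₁ : ∃ δ > (0 : ℝ), (∀ t ∈ Set.Icc (0 : ℝ) δ, DifferentiableAt ℝ f₁ t) ∧
          ∃ M : ℝ, ∀ t ∈ Set.Icc (0 : ℝ) δ, ‖deriv f₁ t‖ ≤ M)
    (hf₂ : ∃ δ > (0 : ℝ), (∀ t ∈ Set.Icc (0 : ℝ) δ, DifferentiableAt ℝ f₂ t) ∧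
          ∃ M : ℝ, ∀ t ∈ Set.Icc (0 : ℝ) δ, ‖deriv f₂ t‖ ≤ M)
    (F : ℂ → ℂ) (hF : ∀ z : ℂ, F z = ∫ t in (-a)..b, φ t * Complex.exp (z * t))
    (K : Set ℂ) (hK : IsCompact K) (hKright : K ⊆ {z : ℂ | 0 < z.re}) :
    ∃ C : ℝ, ∃ N : ℕ, ∀ n ≥ N, ∀ z ∈ K,
      ‖F ((n : ℂ) * z) -
          f₂ 0 * Complex.Gamma (ν + 1) * ((n : ℂ) * z) ^ (-ν - 1) *
            Complex.exp ((b : ℂ) * n * z)‖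
        ≤ (C / n) *
          ‖f₂ 0 * Complex.Gamma (ν + 1) * ((n : ℂ) * z) ^ (-ν - 1) *
            Complex.exp ((b : ℂ) * n * z)‖ :=
  F_asymptotics_right_halfplane_general a b ha hb ν hν φ f₂ hint hφ₂ hf₂0 hf₂ F hF K hK hKright
end

section
/- Let a > 0 and φ(t) = (t+a)^μ f₁(t+a) on [-a, 0], where Re μ > -1, f₁ is integrable with f₁(0) finite and nonzero and f₁' bounded near 0. Then ∫_{-a}^{0} φ(t) t^n dt = (-1)^n f₁(0) Γ(μ+1) n^{-μ-1} a^{n+μ+1} + O(n^{-μ-2} a^n) as n → ∞. -/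
/-!
The substitution `t = -a e^{-x}` turns the moment into
`(-1)^n a^{n+μ+1} ∫_0^∞ e^{-nx} x^μ ψ_a(x) dx` with
`ψ_a(x) = e^{-x} ((1 - e^{-x}) / x)^μ f₁(a (1 - e^{-x}))`.
Since `e^{-x} ≤ (1 - e^{-x}) / x ≤ 1` and `f₁` is differentiable at `0`, `ψ_a(x) = f₁(0) + O(x)`
as `x → 0⁺`, and Watson's lemma gives the expansion: on `(0, u)` the error
`x^μ (ψ_a(x) - f₁(0)) = O(x^{Re μ + 1})` contributes `O(n^{-Re μ - 2})` through the Gamma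
integral, while for `x ≥ u` the bound `e^{-nx} ≤ e^{-(n-1)u} e^{-x}` makes the rest exponentially
small.
-/

open MeasureTheory Complex Filter Asymptotics Set Topology

lemma abs_log_one_sub_exp_neg_div_le {x : ℝ} (hx : 0 < x) :
    |Real.log ((1 - Real.exp (-x)) / x)| ≤ x := by
  have hlower : Real.exp (-x) ≤ (1 - Real.exp (-x)) / x := by
    rw [le_div_iff₀ hx]
    have := Real.add_one_le_exp x
    have : Real.exp (-x) * Real.exp x = 1 := by rw [← Real.exp_add]; simp
    nlinarith [Real.exp_pos (-x)]
  have hupper : (1 - Real.exp (-x)) / x ≤ 1 := by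
    rw [div_le_one hx]; linarith [Real.one_sub_le_exp_neg x]
  have hpos : 0 < (1 - Real.exp (-x)) / x := (Real.exp_pos _).trans_le hlower
  rw [abs_le]
  constructor
  · simpa using Real.log_le_log (Real.exp_pos _) hlower
  · linarith [Real.log_nonpos hpos.le hupper]

lemma integrableOn_rpow_mul_exp_neg_mul_Ioi {r s : ℝ} (hr : -1 < r) (hs : 0 < s) :
    IntegrableOn (fun x : ℝ => x ^ r * Real.exp (-(s * x))) (Ioi 0) := by
  simpa using integrableOn_rpow_mul_exp_neg_mul_rpow hr one_pos hs

lemma integrableOn_exp_neg_mul_mul_cpow_Ioi {μ : ℂ} (hμ : -1 < μ.re) {s : ℝ} (hs : 0 < s) :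
    IntegrableOn (fun x : ℝ => cexp (-(s * x)) * (x : ℂ) ^ μ) (Ioi 0) := by
  refine (integrableOn_rpow_mul_exp_neg_mul_Ioi hμ hs).mono' ?_ ?_
  · refine ContinuousOn.aestronglyMeasurable (fun x (hx : 0 < x) => ?_) measurableSet_Ioi
    exact (Continuous.continuousAt (by fun_prop)).mul
      (continuousAt_ofReal_cpow_const x μ (Or.inr hx.ne')) |>.continuousWithinAt
  · filter_upwards [ae_restrict_mem measurableSet_Ioi] with x (hx : 0 < x)
    rw [norm_mul, norm_cpow_eq_rpow_re_of_pos hx, mul_comm, ← ofReal_mul, ← ofReal_neg,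
      norm_exp_ofReal]

lemma integral_exp_neg_mul_mul_cpow_Ioi {μ : ℂ} (hμ : -1 < μ.re) {s : ℝ} (hs : 0 < s) :
    ∫ x in Ioi (0 : ℝ), cexp (-(s * x)) * (x : ℂ) ^ μ = Gamma (μ + 1) * (s : ℂ) ^ (-μ - 1) := by
  have h := integral_cpow_mul_exp_neg_mul_Ioi (a := μ + 1) (by simp; linarith) hs
  simp only [add_sub_cancel_right] at h
  have harg : (s : ℂ).arg ≠ Real.pi := by
    rw [arg_ofReal_of_nonneg hs.le]; exact Real.pi_ne_zero.symm
  rw [setIntegral_congr_fun measurableSet_Ioi (fun x _ => mul_comm _ _), h, mul_comm, one_div,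
    inv_cpow _ _ harg, show -μ - 1 = -(μ + 1) by ring, cpow_neg]

lemma integrableOn_exp_neg_mul_mul_Ioi {g : ℝ → ℂ} (hg : IntegrableOn g (Ioi 0)) {s : ℝ}
    (hs : 0 ≤ s) : IntegrableOn (fun x : ℝ => cexp (-(s * x)) * g x) (Ioi 0) := by
  refine hg.bdd_mul (c := 1) (Continuous.aestronglyMeasurable (by fun_prop)) ?_
  filter_upwards [ae_restrict_mem measurableSet_Ioi] with x (hx : 0 < x)
  rw [← ofReal_mul, ← ofReal_neg, norm_exp_ofReal, Real.exp_le_one_iff, neg_nonpos]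
  positivity

lemma norm_exp_neg_mul_cpow_mul_sub_le {ψ : ℝ → ℂ} {μ c : ℂ} {C u s x : ℝ} (hs : 1 ≤ s) (hx : 0 < x)
    (hψ : ∀ y ∈ Ioo 0 u, ‖ψ y - c‖ ≤ C * y) (hC : 0 ≤ C) :
    ‖cexp (-(s * x)) * ((x : ℂ) ^ μ * (ψ x - c))‖ ≤
      C * (x ^ (μ.re + 1) * Real.exp (-(s * x))) +
        Real.exp (-((s - 1) * u)) * (Real.exp (-x) * ‖(x : ℂ) ^ μ * (ψ x - c)‖) := by
  have hexp : ‖cexp (-(s * x))‖ = Real.exp (-(s * x)) := by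
    rw [← ofReal_mul, ← ofReal_neg, norm_exp_ofReal]
  rw [norm_mul, hexp]
  rcases lt_or_ge x u with hxu | hux
  · have hnear : ‖(x : ℂ) ^ μ * (ψ x - c)‖ ≤ x ^ (μ.re + 1) * C := by
      rw [norm_mul, norm_cpow_eq_rpow_re_of_pos hx, Real.rpow_add hx, Real.rpow_one, mul_assoc,
        mul_comm x C]
      exact mul_le_mul_of_nonneg_left (hψ x ⟨hx, hxu⟩) (by positivity)
    calc Real.exp (-(s * x)) * ‖(x : ℂ) ^ μ * (ψ x - c)‖
        ≤ Real.exp (-(s * x)) * (x ^ (μ.re + 1) * C) := by gcongr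
      _ = C * (x ^ (μ.re + 1) * Real.exp (-(s * x))) := by ring
      _ ≤ _ := le_add_of_nonneg_right (by positivity)
  · have hfar : Real.exp (-(s * x)) ≤ Real.exp (-((s - 1) * u)) * Real.exp (-x) := by
      rw [← Real.exp_add, Real.exp_le_exp]; nlinarith
    calc Real.exp (-(s * x)) * ‖(x : ℂ) ^ μ * (ψ x - c)‖
        ≤ Real.exp (-((s - 1) * u)) * Real.exp (-x) * ‖(x : ℂ) ^ μ * (ψ x - c)‖ := by gcongr
      _ ≤ _ := by rw [mul_assoc]; exact le_add_of_nonneg_left (by positivity)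

lemma integrableOn_exp_neg_mul_cpow_mul_sub {ψ : ℝ → ℂ} {μ : ℂ} (hμ : -1 < μ.re)
    (hint : IntegrableOn (fun x : ℝ => (x : ℂ) ^ μ * ψ x) (Ioi 0)) (c : ℂ) {s : ℝ} (hs : 0 < s) :
    IntegrableOn (fun x : ℝ => cexp (-(s * x)) * ((x : ℂ) ^ μ * (ψ x - c))) (Ioi 0) :=
  ((integrableOn_exp_neg_mul_mul_Ioi hint hs.le).sub
    ((integrableOn_exp_neg_mul_mul_cpow_Ioi hμ hs).mul_const c)).congr_fun
    (fun x _ => by simp only [Pi.sub_apply]; ring) measurableSet_Ioi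

lemma integral_exp_neg_mul_cpow_mul_sub_gamma {ψ : ℝ → ℂ} {μ : ℂ} (hμ : -1 < μ.re)
    (hint : IntegrableOn (fun x : ℝ => (x : ℂ) ^ μ * ψ x) (Ioi 0)) (c : ℂ) {s : ℝ} (hs : 0 < s) :
    (∫ x in Ioi (0 : ℝ), cexp (-(s * x)) * ((x : ℂ) ^ μ * ψ x)) -
        c * Gamma (μ + 1) * (s : ℂ) ^ (-μ - 1) =
      ∫ x in Ioi (0 : ℝ), cexp (-(s * x)) * ((x : ℂ) ^ μ * (ψ x - c)) := by
  rw [mul_assoc, ← integral_exp_neg_mul_mul_cpow_Ioi hμ hs, ← integral_const_mul,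
    ← integral_sub (integrableOn_exp_neg_mul_mul_Ioi hint hs.le)
      ((integrableOn_exp_neg_mul_mul_cpow_Ioi hμ hs).const_mul c)]
  congr 1; ext x; ring

lemma norm_integral_exp_neg_mul_cpow_mul_sub_le {ψ : ℝ → ℂ} {μ c : ℂ} {C u s : ℝ}
    (hμ : -1 < μ.re) (hint : IntegrableOn (fun x : ℝ => (x : ℂ) ^ μ * ψ x) (Ioi 0))
    (hψ : ∀ y ∈ Ioo 0 u, ‖ψ y - c‖ ≤ C * y) (hC : 0 ≤ C) (hs : 1 ≤ s) :
    ‖∫ x in Ioi (0 : ℝ), cexp (-(s * x)) * ((x : ℂ) ^ μ * (ψ x - c))‖ ≤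
      C * Real.Gamma (μ.re + 2) * s ^ (-(μ.re + 2)) + Real.exp u *
        (∫ x in Ioi (0 : ℝ), Real.exp (-x) * ‖(x : ℂ) ^ μ * (ψ x - c)‖) * Real.exp (-u * s) := by
  have hs0 : 0 < s := one_pos.trans_le hs
  have hK : IntegrableOn (fun x : ℝ => Real.exp (-x) * ‖(x : ℂ) ^ μ * (ψ x - c)‖) (Ioi 0) :=
    IntegrableOn.congr_fun (integrableOn_exp_neg_mul_cpow_mul_sub hμ hint c one_pos).norm
      (fun x _ => by simp only [norm_mul, ← ofReal_mul, ← ofReal_neg, norm_exp_ofReal, one_mul])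
      measurableSet_Ioi
  have hpow := integrableOn_rpow_mul_exp_neg_mul_Ioi (r := μ.re + 1) (by linarith) hs0
  have hGamma : ∫ x in Ioi (0 : ℝ), x ^ (μ.re + 1) * Real.exp (-(s * x)) =
      Real.Gamma (μ.re + 2) * s ^ (-(μ.re + 2)) := by
    rw [show μ.re + 1 = μ.re + 2 - 1 by ring,
      Real.integral_rpow_mul_exp_neg_mul_Ioi (by linarith) hs0, one_div,
      Real.inv_rpow hs0.le, Real.rpow_neg hs0.le, mul_comm]
  have hmaj := (hpow.const_mul C).add (hK.const_mul (Real.exp (-((s - 1) * u))))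
  refine (norm_integral_le_of_norm_le hmaj ?_).trans_eq ?_
  · filter_upwards [ae_restrict_mem measurableSet_Ioi] with x (hx : 0 < x)
    exact norm_exp_neg_mul_cpow_mul_sub_le hs hx hψ hC
  · rw [Pi.add_def, integral_add (hpow.const_mul C) (hK.const_mul _), integral_const_mul,
      integral_const_mul, hGamma, show -((s - 1) * u) = u + -u * s by ring, Real.exp_add]
    ring

/-- Watson's lemma, to first order. -/
theorem integral_exp_neg_mul_cpow_mul_sub_isBigO {ψ : ℝ → ℂ} {μ c : ℂ} (hμ : -1 < μ.re)
    (hint : IntegrableOn (fun x : ℝ => (x : ℂ) ^ μ * ψ x) (Ioi 0))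
    (hψ : (fun x => ψ x - c) =O[𝓝[>] 0] fun x => x) :
    (fun s : ℝ => (∫ x in Ioi (0 : ℝ), cexp (-(s * x)) * ((x : ℂ) ^ μ * ψ x)) -
        c * Gamma (μ + 1) * (s : ℂ) ^ (-μ - 1))
      =O[atTop] fun s => s ^ (-(μ.re + 2)) := by
  obtain ⟨C, hC, hCψ⟩ := hψ.exists_pos
  obtain ⟨u, hu, hnear⟩ : ∃ u > 0, ∀ y ∈ Ioo 0 u, ‖ψ y - c‖ ≤ C * y := by
    obtain ⟨u, hu, hsub⟩ := mem_nhdsGT_iff_exists_Ioo_subset.mp hCψ.bound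
    exact ⟨u, hu, fun y hy => by simpa [abs_of_pos hy.1] using hsub hy⟩
  set K := ∫ x in Ioi (0 : ℝ), Real.exp (-x) * ‖(x : ℂ) ^ μ * (ψ x - c)‖
  have hbound : ∀ᶠ s : ℝ in atTop,
      ‖(∫ x in Ioi (0 : ℝ), cexp (-(s * x)) * ((x : ℂ) ^ μ * ψ x)) -
        c * Gamma (μ + 1) * (s : ℂ) ^ (-μ - 1)‖ ≤
      ‖C * Real.Gamma (μ.re + 2) * s ^ (-(μ.re + 2)) + Real.exp u * K * Real.exp (-u * s)‖ := by
    filter_upwards [eventually_ge_atTop 1] with s hs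
    rw [integral_exp_neg_mul_cpow_mul_sub_gamma hμ hint c (one_pos.trans_le hs)]
    exact (norm_integral_exp_neg_mul_cpow_mul_sub_le hμ hint hnear hC.le hs).trans
      (le_abs_self _)
  exact (IsBigO.of_bound' hbound).trans <| ((isBigO_refl _ _).const_mul_left _).add
    ((isLittleO_exp_neg_mul_rpow_atTop hu _).isBigO.const_mul_left _)

section ExpSubstitution

variable {E : Type*} [NormedAddCommGroup E] [NormedSpace ℝ E] {a : ℝ}

lemma hasDerivAt_neg_mul_exp_neg (x : ℝ) :
    HasDerivAt (fun x => -(a * Real.exp (-x))) (a * Real.exp (-x)) x := by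
  simpa [Pi.neg_def] using (((Real.hasDerivAt_exp (-x)).comp x (hasDerivAt_neg x)).const_mul a).neg

lemma injOn_neg_mul_exp_neg (ha : 0 < a) : InjOn (fun x => -(a * Real.exp (-x))) (Ioi 0) :=
  fun x _ y _ h => by simpa [ha.ne'] using h

lemma image_neg_mul_exp_neg_Ioi (ha : 0 < a) :
    (fun x => -(a * Real.exp (-x))) '' Ioi 0 = Ioo (-a) 0 := by
  ext t
  constructor
  · rintro ⟨x, hx, rfl⟩
    have : Real.exp (-x) < 1 := Real.exp_lt_one_iff.mpr (neg_lt_zero.mpr hx)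
    constructor <;> nlinarith [Real.exp_pos (-x)]
  · rintro ⟨h₁, h₂⟩
    have hpos : 0 < -t / a := div_pos (neg_pos.mpr h₂) ha
    refine ⟨-Real.log (-t / a), ?_, ?_⟩
    · exact neg_pos.mpr (Real.log_neg hpos ((div_lt_one ha).mpr (by linarith)))
    · simp only [neg_neg, Real.exp_log hpos]; field_simp

lemma integral_Ioo_eq_integral_Ioi_neg_mul_exp_neg (ha : 0 < a) (F : ℝ → E) :
    ∫ t in Ioo (-a) 0, F t = ∫ x in Ioi 0, (a * Real.exp (-x)) • F (-(a * Real.exp (-x))) := by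
  rw [← image_neg_mul_exp_neg_Ioi ha, integral_image_eq_integral_abs_deriv_smul measurableSet_Ioi
    (fun x _ => (hasDerivAt_neg_mul_exp_neg x).hasDerivWithinAt) (injOn_neg_mul_exp_neg ha)]
  simp_rw [abs_of_pos (mul_pos ha (Real.exp_pos _))]

lemma integrableOn_Ioo_iff_integrableOn_Ioi_neg_mul_exp_neg (ha : 0 < a) (F : ℝ → E) :
    IntegrableOn F (Ioo (-a) 0) ↔
      IntegrableOn (fun x => (a * Real.exp (-x)) • F (-(a * Real.exp (-x)))) (Ioi 0) := by
  rw [← image_neg_mul_exp_neg_Ioi ha, integrableOn_image_iff_integrableOn_abs_deriv_smul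
    measurableSet_Ioi (fun x _ => (hasDerivAt_neg_mul_exp_neg x).hasDerivWithinAt)
    (injOn_neg_mul_exp_neg ha)]
  simp_rw [abs_of_pos (mul_pos ha (Real.exp_pos _))]

end ExpSubstitution

/-- `ψ_a` of the paper. -/
noncomputable def momentAmplitude (a : ℝ) (μ : ℂ) (f₁ : ℝ → ℂ) (x : ℝ) : ℂ :=
  Real.exp (-x) * (((1 - Real.exp (-x)) / x : ℝ) : ℂ) ^ μ * f₁ (a * (1 - Real.exp (-x)))

lemma exp_neg_mul_one_sub_exp_neg_div_cpow_sub_one_isBigO (μ : ℂ) :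
    (fun x : ℝ => Real.exp (-x) * (((1 - Real.exp (-x)) / x : ℝ) : ℂ) ^ μ - 1)
      =O[𝓝[>] 0] fun x => x := by
  set z : ℝ → ℂ := fun x => -x + μ * Real.log ((1 - Real.exp (-x)) / x)
  have hz : z =O[𝓝[>] 0] fun x => x := by
    refine IsBigO.of_bound (1 + ‖μ‖) ?_
    filter_upwards [self_mem_nhdsWithin] with x (hx : 0 < x)
    have hlog := abs_log_one_sub_exp_neg_div_le hx
    calc ‖z x‖ ≤ ‖(-x : ℂ)‖ + ‖μ‖ * |Real.log ((1 - Real.exp (-x)) / x)| := by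
          simpa [z] using norm_add_le (-x : ℂ) (μ * Real.log ((1 - Real.exp (-x)) / x))
      _ ≤ (1 + ‖μ‖) * ‖x‖ := by
          simp only [norm_neg, Complex.norm_real, Real.norm_eq_abs, abs_of_pos hx]
          nlinarith [norm_nonneg μ]
  have hexp : (fun w : ℂ => cexp w - 1) =O[𝓝 0] fun w => w := by
    simpa using (Complex.hasDerivAt_exp 0).isBigO_sub
  have hz0 : Tendsto z (𝓝[>] 0) (𝓝 0) := hz.trans_tendsto (tendsto_id.mono_left nhdsWithin_le_nhds)
  refine ((hexp.comp_tendsto hz0).trans hz).congr' ?_ EventuallyEq.rfl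
  filter_upwards [self_mem_nhdsWithin] with x (hx : 0 < x)
  have hpos : 0 < (1 - Real.exp (-x)) / x := by
    have : Real.exp (-x) < 1 := Real.exp_lt_one_iff.mpr (by linarith)
    exact div_pos (by linarith) hx
  simp only [Function.comp, z, Complex.exp_add, Complex.ofReal_exp]
  rw [Complex.cpow_def_of_ne_zero (by exact_mod_cast hpos.ne'), ← Complex.ofReal_log hpos.le,
    mul_comm μ]
  push_cast; ring_nf

lemma momentAmplitude_sub_isBigO (a : ℝ) (μ : ℂ) {f₁ : ℝ → ℂ} (hf₁ : DifferentiableAt ℝ f₁ 0) :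
    (fun x => momentAmplitude a μ f₁ x - f₁ 0) =O[𝓝[>] 0] fun x => x := by
  set w : ℝ → ℂ := fun x => Real.exp (-x) * (((1 - Real.exp (-x)) / x : ℝ) : ℂ) ^ μ
  set F : ℝ → ℂ := fun x => f₁ (a * (1 - Real.exp (-x)))
  have hw : (fun x => w x - 1) =O[𝓝[>] 0] fun x => x :=
    exp_neg_mul_one_sub_exp_neg_div_cpow_sub_one_isBigO μ
  have hw_bdd : w =O[𝓝[>] 0] (fun _ => (1 : ℝ)) := by
    have : Tendsto (fun x => w x - 1) (𝓝[>] 0) (𝓝 0) :=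
      hw.trans_tendsto (tendsto_id.mono_left nhdsWithin_le_nhds)
    simpa using (this.add_const 1).isBigO_one ℝ
  have hF : (fun x => F x - f₁ 0) =O[𝓝[>] 0] fun x => x := by
    have hy : DifferentiableAt ℝ (fun x : ℝ => a * (1 - Real.exp (-x))) 0 := by fun_prop
    have hf₁' : DifferentiableAt ℝ f₁ (a * (1 - Real.exp (-0))) := by simpa using hf₁
    simpa using ((hf₁'.comp 0 hy).isBigO_sub).mono nhdsWithin_le_nhds
  have hprod : (fun x => w x * (F x - f₁ 0)) =O[𝓝[>] 0] fun x => x := by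
    simpa using hw_bdd.mul hF
  have hconst : (fun x => (w x - 1) * f₁ 0) =O[𝓝[>] 0] fun x => x := by
    simpa using hw.mul (isBigO_const_const (f₁ 0) one_ne_zero (𝓝[>] (0:ℝ)))
  refine (hprod.add hconst).congr_left fun x => ?_
  simp only [momentAmplitude, w, F]; ring

lemma moment_integrand_neg_mul_exp_neg {a : ℝ} (ha : 0 < a) {μ : ℂ} {φ f₁ : ℝ → ℂ}
    (hφ : ∀ t ∈ Icc (-a) 0, φ t = ((t + a : ℝ) : ℂ) ^ μ * f₁ (t + a)) (n : ℕ) {x : ℝ} (hx : 0 < x) :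
    (a * Real.exp (-x)) • (φ (-(a * Real.exp (-x))) * ((-(a * Real.exp (-x)) : ℝ) : ℂ) ^ n) =
      (-1) ^ n * (a : ℂ) ^ ((n : ℂ) + μ + 1) *
        (cexp (-((n : ℝ) * x)) * ((x : ℂ) ^ μ * momentAmplitude a μ f₁ x)) := by
  have he : Real.exp (-x) < 1 := Real.exp_lt_one_iff.mpr (neg_lt_zero.mpr hx)
  have hmem : -(a * Real.exp (-x)) ∈ Icc (-a) 0 := by
    constructor <;> nlinarith [Real.exp_pos (-x)]
  have hbase : -(a * Real.exp (-x)) + a = a * (x * ((1 - Real.exp (-x)) / x)) := by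
    field_simp; ring
  have hpow : ((-(a * Real.exp (-x)) + a : ℝ) : ℂ) ^ μ =
      (a : ℂ) ^ μ * ((x : ℂ) ^ μ * (((1 - Real.exp (-x)) / x : ℝ) : ℂ) ^ μ) := by
    rw [hbase, ofReal_mul, mul_cpow_ofReal_nonneg ha.le (by positivity), ofReal_mul,
      mul_cpow_ofReal_nonneg hx.le (div_pos (by linarith) hx).le]
  have hexp : cexp (-((n : ℝ) * x)) = (Real.exp (-x) : ℂ) ^ n := by
    rw [ofReal_exp, ← Complex.exp_nat_mul]; push_cast; ring_nf
  have hcpow : (a : ℂ) ^ ((n : ℂ) + μ + 1) = (a : ℂ) ^ n * (a : ℂ) ^ μ * a := by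
    rw [cpow_add _ _ (by exact_mod_cast ha.ne'), cpow_add _ _ (by exact_mod_cast ha.ne'),
      cpow_one, cpow_natCast]
  rw [hφ _ hmem, hpow, hexp, hcpow, momentAmplitude,
    show -(a * Real.exp (-x)) + a = a * (1 - Real.exp (-x)) by ring, real_smul]
  push_cast
  ring_nf

theorem left_endpoint_moment_asymptotics_general
    (a : ℝ) (ha : 0 < a)
    (μ : ℂ) (hμ : -1 < μ.re)
    (φ f₁ : ℝ → ℂ)
    (hint : IntervalIntegrable φ volume (-a) 0)
    (hφ : ∀ t ∈ Set.Icc (-a) 0, φ t = ((t + a : ℝ) : ℂ) ^ μ * f₁ (t + a))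
    (hf₁ : ∃ δ > (0 : ℝ), (∀ t ∈ Set.Icc (0 : ℝ) δ, DifferentiableAt ℝ f₁ t) ∧
          ∃ M : ℝ, ∀ t ∈ Set.Icc (0 : ℝ) δ, ‖deriv f₁ t‖ ≤ M) :
    (fun n : ℕ =>
        (∫ t in (-a)..(0 : ℝ), φ t * (t : ℂ) ^ n) -
          (-1) ^ n * f₁ 0 * Complex.Gamma (μ + 1) * (n : ℂ) ^ (-μ - 1) *
            (a : ℂ) ^ ((n : ℂ) + μ + 1))
      =O[atTop] (fun n : ℕ => ‖((n : ℂ) ^ (-μ - 2))‖ * a ^ n) := by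
  obtain ⟨δ, hδ, hdiff, -⟩ := hf₁
  have hmoment (n : ℕ) : ∫ t in (-a)..(0 : ℝ), φ t * (t : ℂ) ^ n =
      (-1) ^ n * (a : ℂ) ^ ((n : ℂ) + μ + 1) *
        ∫ x in Ioi (0 : ℝ), cexp (-((n : ℝ) * x)) * ((x : ℂ) ^ μ * momentAmplitude a μ f₁ x) := by
    rw [intervalIntegral.integral_of_le (by linarith), integral_Ioc_eq_integral_Ioo,
      integral_Ioo_eq_integral_Ioi_neg_mul_exp_neg ha, ← integral_const_mul]
    exact setIntegral_congr_fun measurableSet_Ioi fun x hx =>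
      moment_integrand_neg_mul_exp_neg ha hφ n hx
  have hψint : IntegrableOn (fun x : ℝ => (x : ℂ) ^ μ * momentAmplitude a μ f₁ x) (Ioi 0) := by
    have h := (integrableOn_Ioo_iff_integrableOn_Ioi_neg_mul_exp_neg ha
      (fun t => φ t * (t : ℂ) ^ 0)).mp (by simpa using hint.1.mono_set Ioo_subset_Ioc_self)
    have hunit : IsUnit ((-1 : ℂ) ^ 0 * (a : ℂ) ^ (((0 : ℕ) : ℂ) + μ + 1)) :=
      (mul_ne_zero (by simp) (by simp [cpow_eq_zero_iff, ha.ne'])).isUnit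
    refine (integrable_const_mul_iff hunit _).mp (h.congr_fun (fun x hx => ?_) measurableSet_Ioi)
    dsimp only
    rw [moment_integrand_neg_mul_exp_neg ha hφ 0 hx]
    simp
  have hwatson := (integral_exp_neg_mul_cpow_mul_sub_isBigO hμ hψint
    (momentAmplitude_sub_isBigO a μ (hdiff 0 ⟨le_rfl, hδ.le⟩))).comp_tendsto
      tendsto_natCast_atTop_atTop
  have hfactor : (fun n : ℕ => (-1 : ℂ) ^ n * (a : ℂ) ^ ((n : ℂ) + μ + 1)) =O[atTop]
      fun n => a ^ n := by
    refine IsBigO.of_bound (a ^ (μ.re + 1)) (Eventually.of_forall fun n => ?_)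
    rw [norm_mul, norm_pow, norm_neg, norm_one, one_pow, one_mul, norm_cpow_eq_rpow_re_of_pos ha,
      Real.norm_of_nonneg (by positivity)]
    simp only [add_re, natCast_re, one_re]
    rw [add_assoc, Real.rpow_add ha, Real.rpow_natCast, mul_comm]
  refine (hfactor.mul hwatson).congr' (Eventually.of_forall fun n => ?_) ?_
  · simp only [Function.comp, hmoment]
    push_cast; ring
  · filter_upwards [eventually_gt_atTop 0] with n hn
    simp only [Function.comp, norm_natCast_cpow_of_pos hn, sub_re, neg_re, re_ofNat]
    ring_nf

/-- Moment asymptotics at the left endpoint: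
`∫_{-a}^0 φ(t) t^n dt = (-1)^n f₁(0) Γ(μ+1) n^{-μ-1} a^{n+μ+1} + O(n^{-μ-2} a^n)`. -/
theorem left_endpoint_moment_asymptotics
    (a : ℝ) (ha : 0 < a)
    (μ : ℂ) (hμ : -1 < μ.re)
    (φ f₁ : ℝ → ℂ)
    (hint : IntervalIntegrable φ volume (-a) 0)
    (hf₁int : IntervalIntegrable f₁ volume 0 a)
    (hφ : ∀ t ∈ Set.Icc (-a) 0, φ t = ((t + a : ℝ) : ℂ) ^ μ * f₁ (t + a))
    (hf₁0 : f₁ 0 ≠ 0)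
    (hf₁ : ∃ δ > (0 : ℝ), (∀ t ∈ Set.Icc (0 : ℝ) δ, DifferentiableAt ℝ f₁ t) ∧
          ∃ M : ℝ, ∀ t ∈ Set.Icc (0 : ℝ) δ, ‖deriv f₁ t‖ ≤ M) :
    (fun n : ℕ =>
        (∫ t in (-a)..(0 : ℝ), φ t * (t : ℂ) ^ n) -
          (-1) ^ n * f₁ 0 * Complex.Gamma (μ + 1) * (n : ℂ) ^ (-μ - 1) *
            (a : ℂ) ^ ((n : ℂ) + μ + 1))
      =O[atTop] (fun n : ℕ => ‖((n : ℂ) ^ (-μ - 2))‖ * a ^ n) :=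
  left_endpoint_moment_asymptotics_general a ha μ hμ φ f₁ hint hφ hf₁
end
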